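/- Let L be a finite language over alphabet Σ in which every word has length exactly n ≥ 3, and suppose L is accepted by a context-free grammar G in Chomsky normal form in which every nonterminal appears in some parse tree. Then L can be written as a union of at most n·|G| balanced rectangles, where a rectangle is a language of the form ∪_{w₁w₃ ∈ L₁, |w₁|=n₁, |w₃|=n₃} {w₁} · L₂ · {w₃} for some L₁ ⊆ Σ^{n₁+n₃}, L₂ ⊆ Σ^{n₂} with n₁ + n₂ + n₃ = n, and 'balanced' means n/3 ≤ n₂ ≤ 2n/3. Moreover, if G is unambiguous, the rectangles in the union can be chosen pairwise disjoint. -/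

import Mathlib

/-- Parse trees over terminals `T` and nonterminals `N`. -/
inductive ParseTree (T N : Type*) : Type _
  | leaf (a : T) : ParseTree T N
  | node (A : N) (children : List (ParseTree T N)) : ParseTree T N

namespace ParseTree

variable {T N : Type*}

/-- The symbol at the root of a parse tree. -/
def rootSymbol : ParseTree T N → Symbol T N
  | .leaf a => Symbol.terminal a
  | .node A _ => Symbol.nonterminal A

mutual
  /-- The word of terminals at the leaves of a parse tree. -/
  def yieldWord : ParseTree T N → List T
    | .leaf a => [a]
    | .node _ cs => yieldWords cs
  def yieldWords : List (ParseTree T N) → List T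
    | [] => []
    | c :: cs => yieldWord c ++ yieldWords cs
end

/-- A parse tree is valid for a grammar `g` if every inner node is an application of a
rule of `g`. -/
inductive Valid (g : ContextFreeGrammar T) : ParseTree T g.NT → Prop
  | leaf (a : T) : Valid g (.leaf a)
  | node (A : g.NT) (cs : List (ParseTree T g.NT))
      (hrule : (⟨A, cs.map rootSymbol⟩ : ContextFreeRule T g.NT) ∈ g.rules)
      (hcs : ∀ c ∈ cs, Valid g c) : Valid g (.node A cs)

/-- A parse tree of a word `w` in the grammar `g`. -/
def IsParseTreeOf (g : ContextFreeGrammar T) (t : ParseTree T g.NT) (w : List T) : Prop :=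
  Valid g t ∧ t.rootSymbol = Symbol.nonterminal g.initial ∧ t.yieldWord = w

end ParseTree

/-- `L'` is a balanced rectangle for word length `n`: a union
`⋃_{(w₁,w₃) ∈ L₁} {w₁} · L₂ · {w₃}` with `|w₁| = n₁`, `|w₃| = n₃`, all words of `L₂` of
length `n₂`, `n₁ + n₂ + n₃ = n` and `n/3 ≤ n₂ ≤ 2n/3` (stated multiplicatively). -/
def IsBalancedRect {α : Type*} (n : ℕ) (L' : Set (List α)) : Prop :=
  ∃ n₁ n₂ n₃ : ℕ, n₁ + n₂ + n₃ = n ∧ n ≤ 3 * n₂ ∧ 3 * n₂ ≤ 2 * n ∧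
    ∃ L₁ : Set (List α × List α), ∃ L₂ : Set (List α),
      (∀ p ∈ L₁, p.1.length = n₁ ∧ p.2.length = n₃) ∧
      (∀ u ∈ L₂, u.length = n₂) ∧
      L' = {w | ∃ p ∈ L₁, ∃ u ∈ L₂, w = p.1 ++ u ++ p.2}

/-!
Fix a parse tree of a word of length `n` and walk down from the root, always into the child
with the longer yield, until the first node whose yield has length at most `2n/3`. This node
is the heavier child of a node whose yield is longer than `2n/3`, so its own yield is longer
than `n/3`. Words are grouped by the label `B` and the start position `j` of this node. Since
every nonterminal occurs in a derivation of a word of length `n`, all parse trees rooted at `B`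
have yields of one common length, so replacing the subtree at that node by any other tree
rooted at `B` gives a parse tree of another word with the same `(B, j)`. Hence each class is a
balanced rectangle whose middle factor is the set of yields of `B`. Moreover `B` occurs in the
right-hand side of a rule and `j < n`, which bounds the number of classes by `n * |G|`; for an
unambiguous grammar every word lies in exactly one class.
-/

lemma List.append_append_inj {α : Type*} {x u z x' u' z' : List α}
    (h : x ++ u ++ z = x' ++ u' ++ z') (hx : x.length = x'.length) (hu : u.length = u'.length) :
    x = x' ∧ u = u' ∧ z = z' := by
  obtain ⟨hxu, rfl⟩ := List.append_inj h (by simp [hx, hu])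
  exact ⟨(List.append_inj hxu hx).1, (List.append_inj hxu hx).2, rfl⟩

def ContextFreeGrammar.IsChomskyNormalForm {T : Type*} (g : ContextFreeGrammar T) : Prop :=
  ∀ r ∈ g.rules,
    (∃ B C : g.NT, r.output = [Symbol.nonterminal B, Symbol.nonterminal C]) ∨
    (∃ a : T, r.output = [Symbol.terminal a])

namespace ParseTree

variable {T N : Type*}

@[simp] lemma yieldWords_nil : yieldWords ([] : List (ParseTree T N)) = [] := rfl

@[simp] lemma yieldWords_cons (c : ParseTree T N) (cs : List (ParseTree T N)) :
    yieldWords (c :: cs) = yieldWord c ++ yieldWords cs := rfl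

@[simp] lemma yieldWord_leaf (a : T) : yieldWord (.leaf a : ParseTree T N) = [a] := rfl

@[simp] lemma yieldWord_node (A : N) (cs : List (ParseTree T N)) :
    yieldWord (.node A cs) = yieldWords cs := rfl

@[simp] lemma yieldWords_append (l₁ l₂ : List (ParseTree T N)) :
    yieldWords (l₁ ++ l₂) = yieldWords l₁ ++ yieldWords l₂ := by
  induction l₁ with
  | nil => rfl
  | cons c cs ih => simp [ih]

@[simp] lemma yieldWords_map_leaf (w : List T) :
    yieldWords (w.map .leaf : List (ParseTree T N)) = w := by
  induction w with
  | nil => rfl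
  | cons a w ih => simp [ih]

@[induction_eliminator]
theorem induction {motive : ParseTree T N → Prop} (leaf : ∀ a, motive (.leaf a))
    (node : ∀ A cs, (∀ c ∈ cs, motive c) → motive (.node A cs)) : ∀ t, motive t
  | .leaf a => leaf a
  | .node A cs => node A cs fun c _ => induction leaf node c

variable {g : ContextFreeGrammar T}

lemma valid_node_iff {A : g.NT} {cs : List (ParseTree T g.NT)} :
    Valid g (.node A cs) ↔ ⟨A, cs.map rootSymbol⟩ ∈ g.rules ∧ ∀ c ∈ cs, Valid g c :=
  ⟨fun | .node _ _ hrule hcs => ⟨hrule, hcs⟩, fun ⟨hrule, hcs⟩ => .node _ _ hrule hcs⟩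

lemma Valid.replace_children {A : g.NT} {cs cs' : List (ParseTree T g.NT)}
    (ht : Valid g (.node A cs)) (hroot : cs'.map rootSymbol = cs.map rootSymbol)
    (hcs' : ∀ c ∈ cs', Valid g c) : Valid g (.node A cs') :=
  .node _ _ (hroot ▸ (valid_node_iff.1 ht).1) hcs'

lemma derives_yieldWords {ts : List (ParseTree T g.NT)}
    (h : ∀ t ∈ ts, g.Derives [t.rootSymbol] (t.yieldWord.map .terminal)) :
    g.Derives (ts.map rootSymbol) ((yieldWords ts).map .terminal) := by
  induction ts with
  | nil => exact .refl _
  | cons t ts ih =>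
    simp only [List.mem_cons, forall_eq_or_imp] at h
    simpa using ((h.1.append_right _).trans ((ih h.2).append_left _))

lemma Valid.derives {t : ParseTree T g.NT} (h : Valid g t) :
    g.Derives [t.rootSymbol] (t.yieldWord.map .terminal) := by
  induction h with
  | leaf a => exact .refl _
  | node A cs hrule _ ih =>
    have hstep : g.Produces [.nonterminal A] (cs.map rootSymbol) :=
      ⟨_, hrule, ContextFreeRule.Rewrites.input_output⟩
    exact hstep.trans_derives (derives_yieldWords ih)

lemma exists_forest_of_derives {v : List (Symbol T g.NT)} {w : List T}
    (h : g.Derives v (w.map .terminal)) :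
    ∃ ts : List (ParseTree T g.NT), ts.map rootSymbol = v ∧ (∀ t ∈ ts, Valid g t) ∧
      yieldWords ts = w := by
  induction h using Relation.ReflTransGen.head_induction_on with
  | refl =>
    refine ⟨w.map .leaf, by simp [Function.comp_def, rootSymbol], ?_, yieldWords_map_leaf w⟩
    simp only [List.mem_map]
    rintro _ ⟨a, -, rfl⟩
    exact .leaf a
  | head hprod _ ih =>
    obtain ⟨ts, hroot, hvalid, hyield⟩ := ih
    obtain ⟨r, hr, hrw⟩ := hprod
    obtain ⟨p, q, rfl, rfl⟩ := hrw.exists_parts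
    rw [List.append_assoc] at hroot
    obtain ⟨l₁, l₂, rfl, rfl, hl₂⟩ := List.map_eq_append_iff.1 hroot
    obtain ⟨cs, l₃, rfl, hcs, rfl⟩ := List.map_eq_append_iff.1 hl₂
    refine ⟨l₁ ++ [.node r.input cs] ++ l₃, by simp [rootSymbol], ?_, by simpa using hyield⟩
    simp only [List.mem_append, List.mem_singleton] at hvalid ⊢
    rintro t ((ht | rfl) | ht)
    · exact hvalid t (.inl ht)
    · exact .node _ _ (hcs ▸ hr) fun c hc => hvalid c (.inr (.inl hc))
    · exact hvalid t (.inr (.inr ht))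

lemma IsParseTreeOf.mem_language {t : ParseTree T g.NT} {w : List T}
    (h : IsParseTreeOf g t w) : w ∈ g.language := by
  obtain ⟨hv, hroot, rfl⟩ := h
  simpa [hroot] using hv.derives

lemma exists_isParseTreeOf {w : List T} (hw : w ∈ g.language) :
    ∃ t, IsParseTreeOf g t w := by
  obtain ⟨ts, hroot, hvalid, hyield⟩ := exists_forest_of_derives hw
  obtain ⟨t, rfl, ht⟩ := List.map_eq_singleton_iff.1 hroot
  exact ⟨t, hvalid t (by simp), ht, by simpa using hyield⟩

def HasYieldLength (g : ContextFreeGrammar T) (B : g.NT) (m : ℕ) : Prop :=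
  ∀ t : ParseTree T g.NT, Valid g t → t.rootSymbol = .nonterminal B → t.yieldWord.length = m

/-- Grafting a `B`-tree into the context `u _ v`, which derives fixed words `x _ z`, gives a word
of the language, so the yield has length `n - |x| - |z|`. -/
lemma exists_hasYieldLength {n : ℕ} (hlen : ∀ w ∈ g.language, w.length = n)
    {u v : List (Symbol T g.NT)} {B : g.NT} {w : List T}
    (hS : g.Derives [.nonterminal g.initial] (u ++ [.nonterminal B] ++ v))
    (hw : g.Derives (u ++ [.nonterminal B] ++ v) (w.map .terminal)) :
    ∃ m, HasYieldLength g B m := by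
  obtain ⟨ts, hroot, hvalid, -⟩ := exists_forest_of_derives hw
  rw [List.append_assoc] at hroot
  obtain ⟨l₁, l₂, rfl, hl₁, hl₂⟩ := List.map_eq_append_iff.1 hroot
  obtain ⟨tB, l₃, rfl, -, hl₃⟩ := List.map_eq_append_iff.1 hl₂
  refine ⟨n - (yieldWords l₁).length - (yieldWords l₃).length, fun s hs hsB => ?_⟩
  have hforest : ∀ t ∈ l₁ ++ s :: l₃, Valid g t := by
    simp only [List.mem_append, List.mem_cons] at hvalid ⊢
    rintro t (ht | rfl | ht)
    · exact hvalid t (.inl ht)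
    · exact hs
    · exact hvalid t (.inr (.inr ht))
  have hderiv := derives_yieldWords fun t ht => (hforest t ht).derives
  simp only [List.map_append, List.map_cons, hl₁, hl₃, hsB] at hderiv
  have hmem : yieldWords (l₁ ++ s :: l₃) ∈ g.language :=
    (g.mem_language_iff _).2 (hS.trans (by simpa using hderiv))
  have := hlen _ hmem
  simp only [yieldWords_append, yieldWords_cons, List.length_append] at this
  omega

/-- Descending from the root into the child with the longer yield, the first node whose yield
has length at most `2n/3`: its label and the position where its yield starts. -/
def balancedNode (n : ℕ) : ParseTree T N → Option (N × ℕ)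
  | .leaf _ => none
  | .node A cs =>
    if 3 * (yieldWords cs).length ≤ 2 * n then some (A, 0) else
    match cs with
    | [c₁, c₂] =>
      if c₂.yieldWord.length ≤ c₁.yieldWord.length then balancedNode n c₁
      else (balancedNode n c₂).map fun q => (q.1, c₁.yieldWord.length + q.2)
    | _ => none

variable {n : ℕ}

lemma balancedNode_of_le {t : ParseTree T N} {B : N} (hB : t.rootSymbol = .nonterminal B)
    (h : 3 * t.yieldWord.length ≤ 2 * n) : t.balancedNode n = some (B, 0) := by
  cases t with
  | leaf a => simp [rootSymbol] at hB
  | node A cs =>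
    obtain rfl : A = B := by simpa [rootSymbol] using hB
    rw [balancedNode.eq_def]
    simp_all

lemma balancedNode_pair_of_lt {A : N} {c₁ c₂ : ParseTree T N}
    (h : 2 * n < 3 * (c₁.yieldWord.length + c₂.yieldWord.length)) :
    (node A [c₁, c₂]).balancedNode n =
      if c₂.yieldWord.length ≤ c₁.yieldWord.length then c₁.balancedNode n
      else (c₂.balancedNode n).map fun q => (q.1, c₁.yieldWord.length + q.2) := by
  rw [balancedNode.eq_2, if_neg (by simp; omega)]

lemma exists_pair_of_balancedNode {A : N} {cs : List (ParseTree T N)} {q : N × ℕ}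
    (h : (node A cs).balancedNode n = some q) (hheavy : 2 * n < 3 * (yieldWords cs).length) :
    ∃ c₁ c₂, cs = [c₁, c₂] := by
  rw [balancedNode.eq_def] at h
  dsimp only at h
  rw [if_neg (by omega)] at h
  split at h
  · exact ⟨_, _, rfl⟩
  · simp at h

lemma Valid.exists_split_of_balancedNode {t : ParseTree T g.NT} (ht : Valid g t)
    {B : g.NT} {j : ℕ} (h : t.balancedNode n = some (B, j)) :
    ∃ x s z, Valid g s ∧ s.rootSymbol = .nonterminal B ∧ t.yieldWord = x ++ s.yieldWord ++ z ∧
      x.length = j ∧ 3 * s.yieldWord.length ≤ 2 * n ∧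
      (n < 3 * t.yieldWord.length → n < 3 * s.yieldWord.length) := by
  induction t generalizing j with
  | leaf a => simp [balancedNode] at h
  | node A cs ih =>
    by_cases hstop : 3 * (yieldWords cs).length ≤ 2 * n
    · rw [balancedNode_of_le rfl hstop] at h
      obtain ⟨rfl, rfl⟩ := Prod.mk.inj (Option.some.inj h).symm
      exact ⟨[], .node B cs, [], ht, rfl, by simp, rfl, hstop, id⟩
    obtain ⟨c₁, c₂, rfl⟩ := exists_pair_of_balancedNode h (by omega)
    have hc := (valid_node_iff.1 ht).2
    simp only [yieldWords_cons, yieldWords_nil, List.append_nil, List.length_append] at hstop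
    rw [balancedNode_pair_of_lt (by omega)] at h
    split_ifs at h with hheavy
    · obtain ⟨x, s, z, hs, hsB, hsplit, rfl, hub, hlb⟩ := ih c₁ (by simp) (hc c₁ (by simp)) h
      refine ⟨x, s, z ++ c₂.yieldWord, hs, hsB, by simp [hsplit], rfl, hub, fun _ => hlb ?_⟩
      omega
    · obtain ⟨⟨B', j'⟩, h₂, hq⟩ := Option.map_eq_some_iff.1 h
      obtain ⟨rfl, rfl⟩ := Prod.mk.inj hq
      obtain ⟨x, s, z, hs, hsB, hsplit, rfl, hub, hlb⟩ := ih c₂ (by simp) (hc c₂ (by simp)) h₂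
      refine ⟨c₁.yieldWord ++ x, s, z, hs, hsB, by simp [hsplit], by simp, hub, fun _ => hlb ?_⟩
      omega

lemma rootSymbol_eq_of_balancedNode {t : ParseTree T N} {B : N} {j : ℕ}
    (h : t.balancedNode n = some (B, j)) (hlight : 3 * t.yieldWord.length ≤ 2 * n) :
    t.rootSymbol = .nonterminal B := by
  cases t with
  | leaf a => simp [balancedNode] at h
  | node A cs =>
    rw [balancedNode_of_le rfl hlight] at h
    cases h
    rfl

lemma Valid.exists_rule_of_balancedNode {t : ParseTree T g.NT} (ht : Valid g t) {B : g.NT}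
    {j : ℕ} (h : t.balancedNode n = some (B, j)) (hheavy : 2 * n < 3 * t.yieldWord.length) :
    ∃ r ∈ g.rules, .nonterminal B ∈ r.output := by
  induction t generalizing j with
  | leaf a => simp [balancedNode] at h
  | node A cs ih =>
    obtain ⟨c₁, c₂, rfl⟩ := exists_pair_of_balancedNode h hheavy
    obtain ⟨hrule, hc⟩ := valid_node_iff.1 ht
    have hchild : ∀ c ∈ [c₁, c₂], ∀ {j'}, c.balancedNode n = some (B, j') →
        ∃ r ∈ g.rules, .nonterminal B ∈ r.output := by
      intro c hcmem j' hcB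
      by_cases hc' : 2 * n < 3 * c.yieldWord.length
      · exact ih c hcmem (hc c hcmem) hcB hc'
      · exact ⟨_, hrule, List.mem_map.2 ⟨c, hcmem, rootSymbol_eq_of_balancedNode hcB (by omega)⟩⟩
    simp only [yieldWord_node, yieldWords_cons, yieldWords_nil, List.append_nil,
      List.length_append] at hheavy
    rw [balancedNode_pair_of_lt hheavy] at h
    split_ifs at h
    · exact hchild c₁ (by simp) h
    · obtain ⟨⟨B', j'⟩, h₂, hq⟩ := Option.map_eq_some_iff.1 h
      obtain ⟨rfl, rfl⟩ := Prod.mk.inj hq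
      exact hchild c₂ (by simp) h₂

lemma Valid.exists_balancedNode
    (hCNF : g.IsChomskyNormalForm) (hn : 2 ≤ n) {t : ParseTree T g.NT} (ht : Valid g t) {A : g.NT}
    (hA : t.rootSymbol = .nonterminal A) : ∃ q, t.balancedNode n = some q := by
  induction t generalizing A with
  | leaf a => simp [rootSymbol] at hA
  | node A cs ih =>
    by_cases hstop : 3 * (yieldWords cs).length ≤ 2 * n
    · exact ⟨_, balancedNode_of_le rfl hstop⟩
    obtain ⟨hrule, hc⟩ := valid_node_iff.1 ht
    rcases hCNF _ hrule with ⟨B₁, B₂, hout⟩ | ⟨a, hout⟩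
    · obtain ⟨c₁, c₂, rfl, h₁, h₂⟩ : ∃ c₁ c₂, cs = [c₁, c₂] ∧
          c₁.rootSymbol = .nonterminal B₁ ∧ c₂.rootSymbol = .nonterminal B₂ := by
        rcases cs with _ | ⟨c₁, _ | ⟨c₂, _ | ⟨c₃, cs⟩⟩⟩ <;> simp at hout
        exact ⟨c₁, c₂, rfl, hout⟩
      simp only [yieldWords_cons, yieldWords_nil, List.append_nil, List.length_append] at hstop
      rw [balancedNode_pair_of_lt (by omega)]
      split_ifs
      · exact ih c₁ (by simp) (hc c₁ (by simp)) h₁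
      · obtain ⟨q, hq⟩ := ih c₂ (by simp) (hc c₂ (by simp)) h₂
        exact ⟨_, by rw [hq]; rfl⟩
    · obtain ⟨c, rfl, hcroot⟩ := List.map_eq_singleton_iff.1 hout
      cases c with
      | node _ _ => simp [rootSymbol] at hcroot
      | leaf b => simp at hstop; omega

lemma Valid.exists_graft_of_balancedNode {m : ℕ} {t : ParseTree T g.NT} (ht : Valid g t)
    {B : g.NT} {x u z : List T} (h : t.balancedNode n = some (B, x.length))
    (hB : HasYieldLength g B m) (hyield : t.yieldWord = x ++ u ++ z) (hu : u.length = m)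
    {s : ParseTree T g.NT} (hs : Valid g s) (hsB : s.rootSymbol = .nonterminal B) :
    ∃ t', Valid g t' ∧ t'.rootSymbol = t.rootSymbol ∧ t'.yieldWord = x ++ s.yieldWord ++ z ∧
      t'.balancedNode n = some (B, x.length) := by
  induction t generalizing x z with
  | leaf a => simp [balancedNode] at h
  | node A cs ih =>
    have hslen := hB s hs hsB
    by_cases hstop : 3 * (yieldWords cs).length ≤ 2 * n
    · rw [balancedNode_of_le rfl hstop] at h
      obtain ⟨rfl, hx⟩ := Prod.mk.inj (Option.some.inj h).symm
      obtain rfl := List.length_eq_zero_iff.1 hx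
      have htlen : (yieldWords cs).length = m := hB _ ht rfl
      obtain rfl : z = [] := by simpa [hu, htlen] using congrArg List.length hyield
      exact ⟨s, hs, hsB, by simp, balancedNode_of_le hsB (by omega)⟩
    obtain ⟨c₁, c₂, rfl⟩ := exists_pair_of_balancedNode h (by omega)
    have hc := (valid_node_iff.1 ht).2
    simp only [yieldWords_cons, yieldWords_nil, List.append_nil, List.length_append] at hstop
    simp only [yieldWord_node, yieldWords_cons, yieldWords_nil, List.append_nil] at hyield
    rw [balancedNode_pair_of_lt (by omega)] at h
    split_ifs at h with hheavy
    · -- `u` is the yield of the subtree at the balanced node of `c₁`: same position and length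
      obtain ⟨x', s', z', hs', hs'B, hsplit, hx', -⟩ :=
        (hc c₁ (by simp)).exists_split_of_balancedNode h
      obtain ⟨rfl, hu', rfl⟩ := List.append_append_inj (x' := x') (z' := z' ++ c₂.yieldWord)
        (by rw [← hyield, hsplit, List.append_assoc]) hx'.symm (by rw [hu, hB s' hs' hs'B])
      obtain ⟨t₁, ht₁, hroot₁, hyield₁, hbal₁⟩ :=
        ih c₁ (by simp) (hc c₁ (by simp)) h (by rw [hsplit, hu'])
      have hlen₁ : t₁.yieldWord.length = c₁.yieldWord.length := by
        simp [hyield₁, hsplit, hslen, hB s' hs' hs'B]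
      refine ⟨.node A [t₁, c₂], ht.replace_children (by simp [hroot₁]) ?_, rfl,
        by simp [hyield₁], ?_⟩
      · simpa [ht₁] using hc c₂
      · rw [balancedNode_pair_of_lt (by omega), if_pos (by omega), hbal₁]
    · obtain ⟨⟨B', j₂⟩, h₂, hq⟩ := Option.map_eq_some_iff.1 h
      obtain ⟨rfl, hx⟩ : B' = B ∧ c₁.yieldWord.length + j₂ = x.length := by simpa using hq
      obtain ⟨x₂, s', z', hs', hs'B, hsplit, rfl, -⟩ :=
        (hc c₂ (by simp)).exists_split_of_balancedNode h₂
      obtain ⟨rfl, hu', rfl⟩ :=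
        List.append_append_inj (x' := c₁.yieldWord ++ x₂) (u' := s'.yieldWord) (z' := z')
          (by rw [← hyield, hsplit]; simp only [List.append_assoc]) (by simp [hx])
          (by rw [hu, hB s' hs' hs'B])
      obtain ⟨t₂, ht₂, hroot₂, hyield₂, hbal₂⟩ :=
        ih c₂ (by simp) (hc c₂ (by simp)) h₂ (by rw [hsplit, hu'])
      have hlen₂ : t₂.yieldWord.length = c₂.yieldWord.length := by
        simp [hyield₂, hsplit, hslen, hB s' hs' hs'B]
      refine ⟨.node A [c₁, t₂], ht.replace_children (by simp [hroot₂]) ?_, rfl,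
        by simp [hyield₂], ?_⟩
      · simpa [ht₂] using hc c₁
      · rw [balancedNode_pair_of_lt (by omega), if_neg (by omega), hbal₂]
        simp

end ParseTree

lemma isBalancedRect_of_exchange {α : Type*} {n j m : ℕ} {R L₂ : Set (List α)}
    (hm : n ≤ 3 * m) (hm' : 3 * m ≤ 2 * n) (hjm : j + m ≤ n)
    (hR : ∀ w ∈ R, w.length = n) (hL₂ : ∀ u ∈ L₂, u.length = m)
    (hsplit : ∀ w ∈ R, ∃ x u z, x.length = j ∧ u ∈ L₂ ∧ w = x ++ u ++ z)
    (hexch : ∀ x u z u', x.length = j → u ∈ L₂ → u' ∈ L₂ → x ++ u ++ z ∈ R →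
      x ++ u' ++ z ∈ R) :
    IsBalancedRect n R := by
  refine ⟨j, m, n - j - m, by omega, hm, hm',
    {p | p.1.length = j ∧ ∃ u ∈ L₂, p.1 ++ u ++ p.2 ∈ R}, L₂, ?_, hL₂, ?_⟩
  · rintro ⟨x, z⟩ ⟨hx, u, hu, hw⟩
    dsimp only at hx hw ⊢
    have hlen := hR _ hw
    simp only [List.length_append, hx, hL₂ u hu] at hlen
    exact ⟨hx, by omega⟩
  · ext w
    constructor
    · intro hw
      obtain ⟨x, u, z, hx, hu, rfl⟩ := hsplit w hw
      exact ⟨(x, z), ⟨hx, u, hu, hw⟩, u, hu, rfl⟩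
    · rintro ⟨⟨x, z⟩, ⟨hx, u, hu, hw⟩, u', hu', rfl⟩
      exact hexch x u z u' hx hu hu' hw

namespace ContextFreeGrammar

open ParseTree

variable {T : Type*} (g : ContextFreeGrammar T) (n : ℕ)

def balancedClass (q : g.NT × ℕ) : Set (List T) :=
  {w | ∃ t, IsParseTreeOf g t w ∧ t.balancedNode n = some q}

open Classical in
noncomputable def outputNonterminals : Finset g.NT :=
  (g.rules.biUnion fun r => r.output.toFinset).preimage Symbol.nonterminal
    (Function.Injective.injOn fun _ _ h => Symbol.nonterminal.inj h)

open Classical in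
noncomputable def balancedIndices : Finset (g.NT × ℕ) :=
  (g.outputNonterminals ×ˢ Finset.range n).filter fun q => (g.balancedClass n q).Nonempty

variable {g n}

lemma mem_outputNonterminals {B : g.NT} :
    B ∈ g.outputNonterminals ↔ ∃ r ∈ g.rules, .nonterminal B ∈ r.output := by
  classical
  rw [outputNonterminals, Finset.mem_preimage]
  simp

lemma card_outputNonterminals_le : g.outputNonterminals.card ≤ ∑ r ∈ g.rules, r.output.length := by
  classical
  calc g.outputNonterminals.card ≤ (g.rules.biUnion fun r => r.output.toFinset).card := by
        rw [outputNonterminals, Finset.card_preimage]; exact Finset.card_filter_le _ _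
    _ ≤ ∑ r ∈ g.rules, r.output.toFinset.card := Finset.card_biUnion_le
    _ ≤ ∑ r ∈ g.rules, r.output.length :=
        Finset.sum_le_sum fun r _ => List.toFinset_card_le _

lemma card_balancedIndices_le :
    (g.balancedIndices n).card ≤ n * ∑ r ∈ g.rules, r.output.length := by
  classical
  calc (g.balancedIndices n).card ≤ (g.outputNonterminals ×ˢ Finset.range n).card := by
        rw [balancedIndices]; exact Finset.card_filter_le _ _
    _ ≤ n * ∑ r ∈ g.rules, r.output.length := by
        rw [Finset.card_product, Finset.card_range, mul_comm]
        exact Nat.mul_le_mul_left n card_outputNonterminals_le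

lemma mem_balancedIndices {q : g.NT × ℕ} :
    q ∈ g.balancedIndices n ↔
      q.1 ∈ g.outputNonterminals ∧ q.2 < n ∧ (g.balancedClass n q).Nonempty := by
  classical
  rw [balancedIndices, Finset.mem_filter, Finset.mem_product, Finset.mem_range, and_assoc]

lemma balancedClass_subset_language (q : g.NT × ℕ) : g.balancedClass n q ⊆ g.language :=
  fun _ ⟨_, ht, _⟩ => ht.mem_language

lemma pairwise_disjoint_balancedClass
    (hunamb : ∀ w ∈ g.language, ∃! t : ParseTree T g.NT, IsParseTreeOf g t w) :
    Pairwise (Function.onFun Disjoint (g.balancedClass n)) := by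
  intro q q' hne
  rw [Function.onFun, Set.disjoint_left]
  rintro w ⟨t, ht, hq⟩ ⟨t', ht', hq'⟩
  obtain rfl := (hunamb w ht.mem_language).unique ht ht'
  exact hne (Option.some.inj (hq.symm.trans hq'))

lemma isBalancedRect_balancedClass (hlang : ∀ w ∈ g.language, w.length = n) (hn : 0 < n)
    {B : g.NT} {j m : ℕ} (hB : HasYieldLength g B m)
    (hne : (g.balancedClass n (B, j)).Nonempty) :
    IsBalancedRect n (g.balancedClass n (B, j)) := by
  have hsplit : ∀ w ∈ g.balancedClass n (B, j), ∃ x s z, Valid g s ∧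
      s.rootSymbol = .nonterminal B ∧ w = x ++ s.yieldWord ++ z ∧ x.length = j ∧
      n < 3 * s.yieldWord.length ∧ 3 * s.yieldWord.length ≤ 2 * n := by
    rintro w ⟨t, ⟨ht, hroot, rfl⟩, hbal⟩
    obtain ⟨x, s, z, hs, hsB, hyield, hx, hub, hlb⟩ := ht.exists_split_of_balancedNode hbal
    have := hlang _ (balancedClass_subset_language _ ⟨t, ⟨ht, hroot, rfl⟩, hbal⟩)
    exact ⟨x, s, z, hs, hsB, hyield, hx, hlb (by omega), hub⟩
  obtain ⟨w, hw⟩ := hne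
  obtain ⟨x, s, z, hs, hsB, rfl, hx, hlb, hub⟩ := hsplit w hw
  have hwlen := hlang _ (balancedClass_subset_language _ hw)
  simp only [List.length_append, hB s hs hsB] at hwlen hlb hub
  refine isBalancedRect_of_exchange (n := n) (j := j) (m := m) (L₂ := {u | ∃ s, Valid g s ∧
      s.rootSymbol = .nonterminal B ∧ s.yieldWord = u}) (by omega) hub (by omega)
    (fun w hw => hlang w (balancedClass_subset_language _ hw))
    (fun _ ⟨s, hs, hsB, hu⟩ => hu ▸ hB s hs hsB) ?_ ?_
  · intro w hw
    obtain ⟨x, s, z, hs, hsB, rfl, hx, -⟩ := hsplit w hw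
    exact ⟨x, s.yieldWord, z, hx, ⟨s, hs, hsB, rfl⟩, rfl⟩
  · rintro x _ z _ hx ⟨s₀, hs₀, hs₀B, rfl⟩ ⟨s', hs', hs'B, rfl⟩ ⟨t, ⟨ht, hroot, hyield⟩, hbal⟩
    subst hx
    obtain ⟨t', ht', hroot', hyield', hbal'⟩ :=
      ht.exists_graft_of_balancedNode hbal hB hyield (hB s₀ hs₀ hs₀B) hs' hs'B
    exact ⟨t', ⟨ht', hroot'.trans hroot, hyield'⟩, hbal'⟩

lemma biUnion_balancedClass
    (hCNF : g.IsChomskyNormalForm) (hn : 2 ≤ n) (hlang : ∀ w ∈ g.language, w.length = n) :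
    ⋃ q ∈ g.balancedIndices n, g.balancedClass n q = g.language := by
  refine Set.Subset.antisymm (Set.iUnion₂_subset fun q _ => balancedClass_subset_language q) ?_
  intro w hw
  obtain ⟨t, ht, hroot, rfl⟩ := exists_isParseTreeOf hw
  obtain ⟨⟨B, j⟩, hbal⟩ := ht.exists_balancedNode hCNF hn hroot
  have hlen := hlang _ hw
  obtain ⟨x, s, z, -, -, hyield, rfl, -, hlb⟩ := ht.exists_split_of_balancedNode hbal
  have hsum : x.length + (s.yieldWord.length + z.length) = n := by simpa [hyield] using hlen
  refine Set.mem_biUnion (x := (B, x.length)) (mem_balancedIndices.2 ⟨?_, ?_, ?_⟩)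
    ⟨t, ⟨ht, hroot, rfl⟩, hbal⟩
  · exact mem_outputNonterminals.2 (ht.exists_rule_of_balancedNode hbal (by omega))
  · have := hlb (by omega)
    dsimp only
    omega
  · exact ⟨t.yieldWord, t, ⟨ht, hroot, rfl⟩, hbal⟩

end ContextFreeGrammar

theorem stmt_17 {T : Type*} (n : ℕ) (hn : 3 ≤ n) (g : ContextFreeGrammar T)
    (L : Set (List T)) (hacc : (g.language : Set (List T)) = L)
    (hfin : L.Finite) (hlen : ∀ w ∈ L, w.length = n)
    (hCNF : ∀ r ∈ g.rules,
      (∃ B C : g.NT, r.output = [Symbol.nonterminal B, Symbol.nonterminal C]) ∨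
      (∃ a : T, r.output = [Symbol.terminal a]))
    (happ : ∀ A : g.NT, ∃ t : ParseTree T g.NT, ∃ w ∈ L,
      ParseTree.IsParseTreeOf g t w ∧
      ∃ u v : List (Symbol T g.NT),
        g.Derives [Symbol.nonterminal g.initial] (u ++ [Symbol.nonterminal A] ++ v) ∧
        g.Derives (u ++ [Symbol.nonterminal A] ++ v) (w.map Symbol.terminal)) :
    ∃ k : ℕ, k ≤ n * (∑ r ∈ g.rules, r.output.length) ∧
      ∃ Rs : Fin k → Set (List T),
        (∀ i, IsBalancedRect n (Rs i)) ∧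
        (⋃ i, Rs i) = L ∧
        ((∀ w ∈ L, ∃! t : ParseTree T g.NT, ParseTree.IsParseTreeOf g t w) →
          Pairwise (Function.onFun Disjoint Rs)) := by
  open ContextFreeGrammar ParseTree in
  subst hacc
  let e := (g.balancedIndices n).equivFin.symm
  refine ⟨_, card_balancedIndices_le, fun i => g.balancedClass n (e i), fun i => ?_, ?_,
    fun hunamb => (pairwise_disjoint_balancedClass hunamb).comp_of_injective
      (Subtype.val_injective.comp e.injective)⟩
  · obtain ⟨-, -, hne⟩ := mem_balancedIndices.1 (e i).2
    obtain ⟨-, w, -, -, u, v, hS, hw⟩ := happ (e i).1.1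
    obtain ⟨m, hm⟩ := exists_hasYieldLength hlen hS hw
    exact isBalancedRect_balancedClass hlen (by omega) hm hne
  · rw [e.surjective.iUnion_comp (fun q => g.balancedClass n q), Set.iUnion_subtype]
    exact biUnion_balancedClass hCNF (by omega) hlen
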